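/- Let Φ = Π₁∀y Π₂.φ be a QCNF, let l be a pure universal literal with vars(l) = y (i.e. l̄ occurs in no clause of φ), and let Φ′ = Π₁Π₂.φ′ be obtained by removing l from all clauses in which it appears. If Φ′ has a QU-resolution refutation, then Φ has a QU-resolution refutation. -/
import Mathlib


/-!
Framework for prenex QCNF: variables are natural numbers; a quantifier prefix is
given by `ex : Var → Bool` (`ex v = true` iff variable `v` is existential), and
the prefix order on variables (hence on literals) is `<` on ℕ.
-/

abbrev Var := ℕ

/-- A literal: a variable together with a polarity (`pos = true` for `x`, `false` for `x̄`). -/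
structure Lit where
  var : Var
  pos : Bool
deriving DecidableEq

/-- The complementary literal. -/
def Lit.neg (l : Lit) : Lit := ⟨l.var, !l.pos⟩

/-- Clauses (disjunctions) and terms (conjunctions) are finite sets of literals. -/
abbrev Clause := Finset Lit
abbrev Term := Finset Lit

/-- A set of literals contains no complementary pair. -/
def LitSetOk (C : Finset Lit) : Prop := ∀ l ∈ C, l.neg ∉ C

instance (C : Finset Lit) : Decidable (LitSetOk C) :=
  inferInstanceAs (Decidable (∀ l ∈ C, l.neg ∉ C))

/-- The resOf on pivot literal `p` (used both for clauses and for terms). -/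
def resOf (p : Lit) (A B : Finset Lit) : Finset Lit := A.erase p ∪ B.erase p.neg

/-- Resolution of `A` (containing `p`) with `B` (containing `p.neg`) is defined: the
union of the side literals contains no complementary pair and neither `p` nor `p.neg`. -/
def ResOk (p : Lit) (A B : Finset Lit) : Prop :=
  p ∈ A ∧ p.neg ∈ B ∧ p ∉ resOf p A B ∧ p.neg ∉ resOf p A B ∧
    LitSetOk (resOf p A B)

instance (p : Lit) (A B : Finset Lit) : Decidable (ResOk p A B) :=
  inferInstanceAs (Decidable (p ∈ A ∧ p.neg ∈ B ∧ p ∉ resOf p A B ∧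
    p.neg ∉ resOf p A B ∧ LitSetOk (resOf p A B)))

/-- ∀-reduction: `C'` results from `C` by removing every universal literal `l` such
that no existential literal `k ∈ C` satisfies `l < k`. -/
def IsForallReduct (ex : Var → Bool) (C C' : Clause) : Prop :=
  ∀ l : Lit, l ∈ C' ↔ l ∈ C ∧ (ex l.var = true ∨ ∃ k ∈ C, ex k.var = true ∧ l.var < k.var)

/-- QU-resolution proofs of a clause from the matrix `φ` under the prefix `ex`:
every clause is in `φ`, or a QU-resOf of two earlier clauses (the pivot may be
universal), or results from an earlier clause by ∀-reduction. -/
inductive QUProof (ex : Var → Bool) (φ : Finset Clause) : Clause → Prop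
  | ax {C : Clause} : C ∈ φ → QUProof ex φ C
  | res {A B : Clause} {p : Lit} : QUProof ex φ A → QUProof ex φ B → ResOk p A B →
      QUProof ex φ (resOf p A B)
  | red {C C' : Clause} : QUProof ex φ C → IsForallReduct ex C C' → QUProof ex φ C'

/-- ∃-reduction: `T'` results from `T` by removing every existential literal `l` such
that no universal literal `k ∈ T` satisfies `l < k`. -/
def IsExistsReduct (ex : Var → Bool) (T T' : Term) : Prop :=
  ∀ l : Lit, l ∈ T' ↔ l ∈ T ∧ (ex l.var = false ∨ ∃ k ∈ T, ex k.var = false ∧ l.var < k.var)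

/-- Model generation rule: `T` is generated from the matrix `φ` if every clause of `φ`
contains a literal belonging to `T`. -/
def ModelGen (φ : Finset Clause) (T : Term) : Prop := ∀ C ∈ φ, ∃ l ∈ C, l ∈ T

/-- `π` is a term-resolution proof of the term `T` from the QCNF with prefix `ex` and
matrix `φ`: a finite sequence of terms ending in `T`, each generated by model
generation or obtained from earlier terms by ∃-reduction or term-resolution. -/
def IsTermResProof (ex : Var → Bool) (φ : Finset Clause) (π : List Term) (T : Term) : Prop :=
  π ≠ [] ∧ π.getLast? = some T ∧
    ∀ i : Fin π.length, LitSetOk (π.get i) ∧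
      (ModelGen φ (π.get i) ∨
        (∃ j : Fin π.length, j < i ∧ IsExistsReduct ex (π.get j) (π.get i)) ∨
        (∃ j k : Fin π.length, j < i ∧ k < i ∧ ∃ p : Lit,
          ResOk p (π.get j) (π.get k) ∧ π.get i = resOf p (π.get j) (π.get k)))

/-- Value of a literal under a total assignment. -/
def evalLit (σ : Var → Bool) (l : Lit) : Bool := if l.pos then σ l.var else !σ l.var

/-- A strategy assigns to each (existential) variable a Boolean function of the
universal assignment — the semantic counterpart of a propositional formula. -/
abbrev Strategy := Var → (Var → Bool) → Bool

/-- The total assignment induced by a strategy `M` and a universal assignment `τ`. -/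
def Strategy.assign (ex : Var → Bool) (M : Strategy) (τ : Var → Bool) : Var → Bool :=
  fun v => if ex v then M v τ else τ v

/-- The definition of each existential variable depends only on the universal
variables preceding it in the prefix. -/
def WellFormed (ex : Var → Bool) (M : Strategy) : Prop :=
  ∀ e, ex e = true → ∀ τ τ' : Var → Bool,
    (∀ u, ex u = false → u < e → τ u = τ' u) → M e τ = M e τ'

/-- `M` is a model of the QCNF with prefix `ex` and matrix `φ`: it is a well-formed
strategy and `M(φ)` is a tautology. -/
def IsModel (ex : Var → Bool) (φ : Finset Clause) (M : Strategy) : Prop :=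
  WellFormed ex M ∧
    ∀ τ : Var → Bool, ∀ C ∈ φ, ∃ l ∈ C, evalLit (Strategy.assign ex M τ) l = true

/-- A term `T` agrees with an assignment `τ` to the universal variables iff there is
no (universal) literal `l` with `l̄ ∈ T` and `τ(l) = 1`. -/
def Agrees (ex : Var → Bool) (τ : Var → Bool) (T : Term) : Prop :=
  ¬∃ l : Lit, ex l.var = false ∧ l.neg ∈ T ∧ evalLit τ l = true

/-- Edge `a → b` of the binary implication graph of `φ`: the binary clause
`a.neg ∨ b` is in `φ` (a clause `l₁ ∨ l₂` yields the edges `l̄₁ → l₂`, `l̄₂ → l₁`). -/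
def ImpEdge (φ : Finset Clause) (a b : Lit) : Prop :=
  a ≠ b ∧ a.neg ≠ b ∧ ({a.neg, b} : Clause) ∈ φ

/-- The existential literal `l` of the clause `C` is blocked in the matrix `φ`. -/
def BlockedIn (ex : Var → Bool) (φ : Finset Clause) (C : Clause) (l : Lit) : Prop :=
  ex l.var = true ∧ l ∈ C ∧ ∀ D ∈ φ, l.neg ∈ D → ∃ k ∈ C, k.var < l.var ∧ k.neg ∈ D

/-- One step of blocked clause elimination: remove one blocked clause. -/
def BCEStep (ex : Var → Bool) (φ φ' : Finset Clause) : Prop :=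
  ∃ C ∈ φ, (∃ l, BlockedIn ex φ C l) ∧ φ' = φ.erase C

/-- The side-condition for eliminating the existential variable `x` from the matrix `φ`. -/
def VEside (x : Var) (φ : Finset Clause) : Prop :=
  ∀ C ∈ φ, (⟨x, true⟩ : Lit) ∈ C → (∃ k ∈ C, x < k.var) →
    ∀ D ∈ φ, (⟨x, false⟩ : Lit) ∈ D → ∃ z ∈ C, z.var < x ∧ z.neg ∈ D

/-- The set of all defined resolvents on `x` between the clauses of `φ` containing the
literal `x` and those containing `x̄`. -/
def VEresolvents (x : Var) (φ : Finset Clause) : Finset Clause :=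
  ((φ ×ˢ φ).filter fun q => ResOk ⟨x, true⟩ q.1 q.2).image
    fun q => resOf ⟨x, true⟩ q.1 q.2

/-- Variable elimination of `x`: replace all clauses mentioning `x` by all defined
resolvents on `x`. -/
def VEapply (x : Var) (φ : Finset Clause) : Finset Clause :=
  φ.filter (fun C => (⟨x, true⟩ : Lit) ∉ C ∧ (⟨x, false⟩ : Lit) ∉ C) ∪ VEresolvents x φ

/-- The variables of Φₙ (0-indexed): `uᵢ` is variable `2*i`, `eᵢ` is variable `2*i+1`,
so the prefix `∀u₀∃e₀…∀u_{n-1}∃e_{n-1}` is the natural order. -/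
def uLit (i : ℕ) (b : Bool) : Lit := ⟨2 * i, b⟩
def eLit (i : ℕ) (b : Bool) : Lit := ⟨2 * i + 1, b⟩

/-- The prefix of Φₙ: even variables universal, odd variables existential. -/
def phiEx : Var → Bool := fun v => v % 2 == 1

/-- The clause `ūᵢ ∨ eᵢ`. -/
def posClause (i : ℕ) : Clause := {uLit i false, eLit i true}
/-- The clause `uᵢ ∨ ēᵢ`. -/
def negClause (i : ℕ) : Clause := {uLit i true, eLit i false}

/-- The matrix of Φₙ: `⋀_{i<n} (ūᵢ ∨ eᵢ) ∧ (uᵢ ∨ ēᵢ)`. -/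
def PhiMatrix (n : ℕ) : Finset Clause :=
  (Finset.range n).biUnion fun i => {posClause i, negClause i}

/-- The set `W` of witnesses for the literal `l` being blocked in the clause `C`. -/
def witnesses (φ : Finset Clause) (C : Clause) (l : Lit) : Finset Lit :=
  C.filter fun k => k ≠ l ∧ k.var < l.var ∧ ∃ D ∈ φ, k.neg ∈ D ∧ l.neg ∈ D

/-- `φ` with all literals not less than `x` deleted from each clause. -/
def restrictBelow (x : Var) (φ : Finset Clause) : Finset Clause :=
  φ.image fun C => C.filter fun l => l.var < x


lemma lit_neg_neg (l : Lit) : l.neg.neg = l := by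
  cases l; simp [Lit.neg]

lemma lit_neg_ne (l : Lit) : l.neg ≠ l := by
  cases l with
  | mk v p => simp [Lit.neg]

lemma resOf_subset (p : Lit) (A B : Finset Lit) : resOf p A B ⊆ A ∪ B := by
  intro m hm
  rcases Finset.mem_union.1 hm with h | h
  · exact Finset.mem_union_left _ (Finset.mem_of_mem_erase h)
  · exact Finset.mem_union_right _ (Finset.mem_of_mem_erase h)

lemma notin_proof {ex : Var → Bool} {ψ : Finset Clause} {C : Clause}
    (h : QUProof ex ψ C) (m : Lit) (hm : ∀ D ∈ ψ, m ∉ D) : m ∉ C := by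
  induction h with
  | ax hC => exact hm _ hC
  | res hA hB hok ihA ihB =>
      intro hmem
      rcases Finset.mem_union.1 (resOf_subset _ _ _ hmem) with h | h
      · exact ihA h
      · exact ihB h
  | red hC hred ih =>
      intro hmem
      exact ih ((hred m).1 hmem).1

lemma litSetOk_insert {l : Lit} {R : Finset Lit} (hR : LitSetOk R)
    (h2 : l.neg ∉ R) : LitSetOk (insert l R) := by
  intro m hm
  rcases Finset.mem_insert.1 hm with rfl | hm
  · intro hc
    rcases Finset.mem_insert.1 hc with h | h
    · exact lit_neg_ne m h
    · exact h2 h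
  · intro hc
    rcases Finset.mem_insert.1 hc with h | h
    · apply h2
      have : m = l.neg := by rw [← h, lit_neg_neg]
      rwa [← this]
    · exact hR m hm h

theorem stmt12 (ex : Var → Bool) (φ : Finset Clause) (hok : ∀ C ∈ φ, LitSetOk C)
    (l : Lit) (hu : ex l.var = false)
    (hpure : ∀ C ∈ φ, l.neg ∉ C)
    (href : QUProof ex (φ.image fun C => C.erase l) ∅) :
    QUProof ex φ ∅ := by
  have hφ' : ∀ D ∈ (φ.image fun C => C.erase l), l ∉ D ∧ l.neg ∉ D := by
    intro D hD
    rcases Finset.mem_image.1 hD with ⟨E, hE, rfl⟩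
    exact ⟨Finset.notMem_erase _ _, fun hc => hpure E hE (Finset.mem_of_mem_erase hc)⟩
  have key : ∀ C : Clause, QUProof ex (φ.image fun C => C.erase l) C →
      QUProof ex φ C ∨ QUProof ex φ (insert l C) := by
    intro C h
    induction h with
    | @ax C hC =>
        rcases Finset.mem_image.1 hC with ⟨D, hD, rfl⟩
        by_cases hl : l ∈ D
        · right
          rw [Finset.insert_erase hl]
          exact QUProof.ax hD
        · left
          rw [Finset.erase_eq_of_notMem hl]
          exact QUProof.ax hD
    | @res A B p hA hB hrok ihA ihB =>
        have hlA : l ∉ A := notin_proof hA l (fun D hD => (hφ' D hD).1)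
        have hlB : l ∉ B := notin_proof hB l (fun D hD => (hφ' D hD).1)
        have hnA : l.neg ∉ A := notin_proof hA l.neg (fun D hD => (hφ' D hD).2)
        have hnB : l.neg ∉ B := notin_proof hB l.neg (fun D hD => (hφ' D hD).2)
        obtain ⟨hpA, hpB, hpR, hpnR, hRok⟩ := hrok
        have hpl : l ≠ p := fun h => hlA (h ▸ hpA)
        have hpnl : l ≠ p.neg := fun h => hlB (h ▸ hpB)
        have hlR : l ∉ resOf p A B := fun h =>
          (Finset.mem_union.1 (resOf_subset _ _ _ h)).elim hlA hlB
        have hnR : l.neg ∉ resOf p A B := fun h =>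
          (Finset.mem_union.1 (resOf_subset _ _ _ h)).elim hnA hnB
        have heqL : resOf p (insert l A) B = insert l (resOf p A B) := by
          unfold resOf
          rw [Finset.erase_insert_of_ne hpl, Finset.insert_union]
        have heqR : resOf p A (insert l B) = insert l (resOf p A B) := by
          unfold resOf
          rw [Finset.erase_insert_of_ne hpnl, Finset.union_insert]
        have heqB : resOf p (insert l A) (insert l B) = insert l (resOf p A B) := by
          unfold resOf
          rw [Finset.erase_insert_of_ne hpl, Finset.erase_insert_of_ne hpnl,
            Finset.insert_union, Finset.union_insert, Finset.insert_idem]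
        have hInsOk : ∀ X, resOf p (insert l A) B = X ∨ resOf p A (insert l B) = X ∨
            resOf p (insert l A) (insert l B) = X → True := fun _ _ => trivial
        have hnotp : p ∉ insert l (resOf p A B) := by
          intro hc
          rcases Finset.mem_insert.1 hc with h | h
          · exact hpl h.symm
          · exact hpR h
        have hnotpn : p.neg ∉ insert l (resOf p A B) := by
          intro hc
          rcases Finset.mem_insert.1 hc with h | h
          · exact hpnl h.symm
          · exact hpnR h
        have hokIns : LitSetOk (insert l (resOf p A B)) := litSetOk_insert hRok hnR
        rcases ihA with pA | pA <;> rcases ihB with pB | pB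
        · exact Or.inl (QUProof.res pA pB ⟨hpA, hpB, hpR, hpnR, hRok⟩)
        · refine Or.inr ?_
          rw [← heqR]
          refine QUProof.res pA pB ?_
          exact ⟨hpA, Finset.mem_insert_of_mem hpB, heqR ▸ hnotp, heqR ▸ hnotpn,
            heqR ▸ hokIns⟩
        · refine Or.inr ?_
          rw [← heqL]
          refine QUProof.res pA pB ?_
          exact ⟨Finset.mem_insert_of_mem hpA, hpB, heqL ▸ hnotp, heqL ▸ hnotpn,
            heqL ▸ hokIns⟩
        · refine Or.inr ?_
          rw [← heqB]
          refine QUProof.res pA pB ?_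
          exact ⟨Finset.mem_insert_of_mem hpA, Finset.mem_insert_of_mem hpB,
            heqB ▸ hnotp, heqB ▸ hnotpn, heqB ▸ hokIns⟩
    | @red C C' hC hred ih =>
        rcases ih with pC | pC
        · exact Or.inl (QUProof.red pC hred)
        · by_cases hw : ∃ k ∈ C, ex k.var = true ∧ l.var < k.var
          · refine Or.inr (QUProof.red pC ?_)
            intro m
            constructor
            · intro hm
              rcases Finset.mem_insert.1 hm with rfl | hm
              · refine ⟨Finset.mem_insert_self _ _, Or.inr ?_⟩
                obtain ⟨k, hk, hke, hkv⟩ := hw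
                exact ⟨k, Finset.mem_insert_of_mem hk, hke, hkv⟩
              · obtain ⟨hmC, hcond⟩ := (hred m).1 hm
                refine ⟨Finset.mem_insert_of_mem hmC, ?_⟩
                rcases hcond with h | ⟨k, hk, hke, hkv⟩
                · exact Or.inl h
                · exact Or.inr ⟨k, Finset.mem_insert_of_mem hk, hke, hkv⟩
            · rintro ⟨hm, hcond⟩
              have hcond' : ex m.var = true ∨ ∃ k ∈ C, ex k.var = true ∧ m.var < k.var := by
                rcases hcond with h | ⟨k, hk, hke, hkv⟩
                · exact Or.inl h
                · rcases Finset.mem_insert.1 hk with rfl | hk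
                  · rw [hu] at hke; exact absurd hke (by simp)
                  · exact Or.inr ⟨k, hk, hke, hkv⟩
              rcases Finset.mem_insert.1 hm with rfl | hm
              · exact Finset.mem_insert_self _ _
              · exact Finset.mem_insert_of_mem ((hred m).2 ⟨hm, hcond'⟩)
          · refine Or.inl (QUProof.red pC ?_)
            intro m
            constructor
            · intro hm
              obtain ⟨hmC, hcond⟩ := (hred m).1 hm
              refine ⟨Finset.mem_insert_of_mem hmC, ?_⟩
              rcases hcond with h | ⟨k, hk, hke, hkv⟩
              · exact Or.inl h
              · exact Or.inr ⟨k, Finset.mem_insert_of_mem hk, hke, hkv⟩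
            · rintro ⟨hm, hcond⟩
              have hcond' : ex m.var = true ∨ ∃ k ∈ C, ex k.var = true ∧ m.var < k.var := by
                rcases hcond with h | ⟨k, hk, hke, hkv⟩
                · exact Or.inl h
                · rcases Finset.mem_insert.1 hk with rfl | hk
                  · rw [hu] at hke; exact absurd hke (by simp)
                  · exact Or.inr ⟨k, hk, hke, hkv⟩
              rcases Finset.mem_insert.1 hm with rfl | hm
              · exfalso
                rcases hcond' with h | ⟨k, hk, hke, hkv⟩
                · rw [hu] at h; exact absurd h (by simp)
                · exact hw ⟨k, hk, hke, hkv⟩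
              · exact (hred m).2 ⟨hm, hcond'⟩
  rcases key ∅ href with p | p
  · exact p
  · refine QUProof.red p ?_
    intro m
    simp only [Finset.notMem_empty, false_iff]
    rintro ⟨hm, hcond⟩
    rcases Finset.mem_insert.1 hm with rfl | hm
    · rcases hcond with h | ⟨k, hk, hke, hkv⟩
      · rw [hu] at h; exact absurd h (by simp)
      · rcases Finset.mem_insert.1 hk with rfl | hk
        · rw [hu] at hke; exact absurd hke (by simp)
        · exact absurd hk (Finset.notMem_empty _)
    · exact absurd hm (Finset.notMem_empty _)
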